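/- Let x be a solution of the delayed consensus inequality on [t₀,∞), let ξ ≥ t₀, and let Λ(ξ) = max_{i∈[1:n]} sup_{s∈[ξ−h̄,ξ]} x_i(s). Then with θ := e^{−(n−1)·ā·h̄} one has, for every i ∈ [1:n] and every t ∈ [ξ, ξ+h̄]: x_i(t) ≤ θ·x_i(ξ) + (1−θ)·Λ(ξ). -/

import Mathlib

open MeasureTheory Set Filter intervalIntegral

noncomputable section

/-- Standing assumptions on the weight functions: measurable,
`0 ≤ a i j t ≤ ā` on `[0,∞)` and `a i i ≡ 0`. -/
def GoodWeights (n : ℕ) (abar : ℝ) (a : Fin n → Fin n → ℝ → ℝ) : Prop :=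
  (∀ i j, Measurable (a i j)) ∧
  (∀ i j, ∀ t : ℝ, 0 ≤ t → 0 ≤ a i j t ∧ a i j t ≤ abar) ∧
  (∀ i, ∀ t : ℝ, 0 ≤ t → a i i t = 0)

/-- Standing assumptions on the delay functions: measurable,
`0 ≤ h i j t ≤ h̄` on `[0,∞)` and `h i i ≡ 0`. -/
def GoodDelays (n : ℕ) (hbar : ℝ) (h : Fin n → Fin n → ℝ → ℝ) : Prop :=
  (∀ i j, Measurable (h i j)) ∧
  (∀ i j, ∀ t : ℝ, 0 ≤ t → 0 ≤ h i j t ∧ h i j t ≤ hbar) ∧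
  (∀ i, ∀ t : ℝ, 0 ≤ t → h i i t = 0)

/-- `x` is bounded on every compact subset of `[t₀ - h̄, ∞)`. -/
def LocBounded (n : ℕ) (t0 hbar : ℝ) (x : ℝ → Fin n → ℝ) : Prop :=
  ∀ T : ℝ, ∃ C : ℝ, ∀ i : Fin n, ∀ s ∈ Icc (t0 - hbar) T, |x s i| ≤ C

/-- `x` is a solution of the delayed consensus differential *inequality* on `[t₀,∞)`:
it is locally bounded on `[t₀ - h̄, ∞)`, absolutely continuous on `[t₀,∞)` with a.e.
derivative `D` (encoded via the integral representation with locally integrable `D`),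
and `D` satisfies the consensus inequality almost everywhere on `[t₀,∞)`. -/
def IsSolIneq (n : ℕ) (a h : Fin n → Fin n → ℝ → ℝ) (hbar t0 : ℝ)
    (x D : ℝ → Fin n → ℝ) : Prop :=
  LocBounded n t0 hbar x ∧
  (∀ i : Fin n, ∀ T : ℝ, IntegrableOn (fun s => D s i) (Icc t0 T)) ∧
  (∀ i : Fin n, ∀ t : ℝ, t0 ≤ t → x t i = x t0 i + ∫ s in t0..t, D s i) ∧
  (∀ᵐ t : ℝ ∂volume, t0 ≤ t → ∀ i : Fin n,
    D t i ≤ ∑ j : Fin n, a i j t * (x (t - h i j t) j - x t i))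

/-- `x` is a solution of the delayed consensus *equation* on `[t₀,∞)`. -/
def IsSolEq (n : ℕ) (a h : Fin n → Fin n → ℝ → ℝ) (hbar t0 : ℝ)
    (x D : ℝ → Fin n → ℝ) : Prop :=
  LocBounded n t0 hbar x ∧
  (∀ i : Fin n, ∀ T : ℝ, IntegrableOn (fun s => D s i) (Icc t0 T)) ∧
  (∀ i : Fin n, ∀ t : ℝ, t0 ≤ t → x t i = x t0 i + ∫ s in t0..t, D s i) ∧
  (∀ᵐ t : ℝ ∂volume, t0 ≤ t → ∀ i : Fin n,
    D t i = ∑ j : Fin n, a i j t * (x (t - h i j t) j - x t i))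

/-- `Λ(t) = max_i sup_{s ∈ [t-h̄, t]} x_i(s)`. -/
def Lam (n : ℕ) (hbar : ℝ) (x : ℝ → Fin n → ℝ) (t : ℝ) : ℝ :=
  ⨆ i : Fin n, sSup ((fun s => x s i) '' Icc (t - hbar) t)

/-- `λ(t) = min_i inf_{s ∈ [t-h̄, t]} x_i(s)`. -/
def lam (n : ℕ) (hbar : ℝ) (x : ℝ → Fin n → ℝ) (t : ℝ) : ℝ :=
  ⨅ i : Fin n, sInf ((fun s => x s i) '' Icc (t - hbar) t)

/-- Non-instantaneous type-symmetry of the weight matrix with sequence `tp` and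
constant `K` (Definition 1). -/
def NonInstTypeSymm (n : ℕ) (a : Fin n → Fin n → ℝ → ℝ) (tp : ℕ → ℝ) (K : ℝ) : Prop :=
  tp 0 = 0 ∧ StrictMono tp ∧ Tendsto tp atTop atTop ∧ 1 ≤ K ∧
  ∀ p : ℕ, ∀ i j : Fin n,
    K⁻¹ * ∫ t in tp p..tp (p + 1), a j i t ≤ (∫ t in tp p..tp (p + 1), a i j t) ∧
    (∫ t in tp p..tp (p + 1), a i j t) ≤ K * ∫ t in tp p..tp (p + 1), a j i t

/-- The persistent graph `G_∞`, whose arcs are the pairs `(j,i)` with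
`∫_0^∞ a_{ij} = ∞` (i.e. `a i j` is not integrable on `[0,∞)`), is connected:
the symmetric reflexive-transitive closure of the arc relation relates any two nodes. -/
def PersGraphConnected (n : ℕ) (a : Fin n → Fin n → ℝ → ℝ) : Prop :=
  ∀ u v : Fin n, Relation.ReflTransGen
    (fun p q => ¬ IntegrableOn (a q p) (Ici 0) ∨ ¬ IntegrableOn (a p q) (Ici 0)) u v

/-- The weight matrix is repeatedly strongly connected with sequence `tp` and
constant `ε` (Definition 2): on each `[t_p, t_{p+1}]`, the graph whose arcs `(j,i)`
satisfy `∫_{t_p}^{t_{p+1}} a_{ij} ≥ ε` is strongly connected. -/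
def RepeatedlyStronglyConnected (n : ℕ) (a : Fin n → Fin n → ℝ → ℝ)
    (tp : ℕ → ℝ) (ε : ℝ) : Prop :=
  tp 0 = 0 ∧ StrictMono tp ∧ Tendsto tp atTop atTop ∧ 0 < ε ∧
  ∀ p : ℕ, ∀ u v : Fin n, Relation.ReflTransGen
    (fun i j => ε ≤ ∫ t in tp p..tp (p + 1), a j i t) u v

/-- The quantity `M = sup_{i,j,p} ∫_{t_p}^{t_{p+1}} a_{ij}` is finite, bounded by `M`. -/
def MBound (n : ℕ) (a : Fin n → Fin n → ℝ → ℝ) (tp : ℕ → ℝ) (M : ℝ) : Prop :=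
  ∀ p : ℕ, ∀ i j : Fin n, (∫ t in tp p..tp (p + 1), a i j t) ≤ M

end

/-! Write `L = Λ(ξ)` and `K = (n - 1) ā`. While every state, delayed or not, stays below `L`, the
right-hand side for agent `i` is at most `K (L - x_i)`, so `x_i` is dominated by the solution
`L - (L - x_i(ξ)) e^{-K(t-ξ)}` of `z' = K (L - z)`, and `e^{-K(t-ξ)} ≥ θ` on `[ξ, ξ + h̄]`.
Since `x` is only absolutely continuous, the comparison is made with the strict barriers
`L - (L - x_i(ξ)) e^{-K(t-ξ)} + ε e^{K(t-ξ)}` for all agents at once (the first agent to touch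
its barrier would have to cross a strip of width `ε` faster than the barrier rises), and then
`ε → 0`. -/

open Real

theorem continuousOn_of_integral_rep {x D : ℝ → ℝ} {α β : ℝ} (hD : IntegrableOn D (Icc α β))
    (hx : ∀ t ∈ Icc α β, x t = x α + ∫ s in α..t, D s) : ContinuousOn x (Icc α β) := by
  rcases le_or_gt α β with hαβ | hβα
  · rw [← uIcc_of_le hαβ] at hD hx ⊢
    exact (continuousOn_const.add
      (intervalIntegral.continuousOn_primitive_interval hD)).congr hx
  · simp [Icc_eq_empty_of_lt hβα]

theorem integral_le_sub_of_ae_le_deriv {D c c' : ℝ → ℝ} {u v : ℝ} (huv : u ≤ v)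
    (hD : IntervalIntegrable D volume u v) (hc : ∀ s ∈ Icc u v, HasDerivAt c (c' s) s)
    (hc' : IntervalIntegrable c' volume u v) (hle : ∀ᵐ s, s ∈ Ioo u v → D s ≤ c' s) :
    ∫ s in u..v, D s ≤ c v - c u := by
  rw [← intervalIntegral.integral_eq_sub_of_hasDerivAt (by rwa [uIcc_of_le huv]) hc']
  refine intervalIntegral.integral_mono_ae_restrict huv hD hc' ?_
  rw [← Measure.restrict_congr_set Ioo_ae_eq_Icc]
  exact (ae_restrict_iff' measurableSet_Ioo).2 hle

theorem le_barrier_of_ae_deriv_le {ι : Type*} [Finite ι] {x D : ℝ → ι → ℝ}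
    {c c' : ι → ℝ → ℝ} {α β ε : ℝ} (hε : 0 < ε)
    (hD : ∀ i, IntegrableOn (fun s => D s i) (Icc α β))
    (hx : ∀ i, ∀ t ∈ Icc α β, x t i = x α i + ∫ s in α..t, D s i)
    (hc : ∀ i, ∀ s ∈ Icc α β, HasDerivAt (c i) (c' i s) s)
    (hc' : ∀ i, IntegrableOn (c' i) (Icc α β))
    (hinit : ∀ i, x α i ≤ c i α - ε)
    (hslope : ∀ᵐ s, s ∈ Ioo α β → ∀ i, (∀ u ∈ Icc α s, ∀ j, x u j ≤ c j u) →
      c i s - ε ≤ x s i → D s i ≤ c' i s) :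
    ∀ t ∈ Icc α β, ∀ i, x t i ≤ c i t := by
  have hxc : ∀ i, ContinuousOn (fun t => x t i) (Icc α β) := fun i =>
    continuousOn_of_integral_rep (hD i) (hx i)
  have hcc : ∀ i, ContinuousOn (c i) (Icc α β) := fun i s hs =>
    (hc i s hs).continuousAt.continuousWithinAt
  -- At the first time `T` some coordinate `k` touches its barrier, integrate `D k` over the last
  -- stretch before `T` on which `x k` stays within `ε` of the barrier: there `D k ≤ c' k`.
  by_contra! hcross
  obtain ⟨t, ht, i, hti⟩ := hcross
  set S := ⋃ j, {s | s ∈ Icc α β ∧ c j s ≤ x s j}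
  have hS : IsCompact S := isCompact_Icc.of_isClosed_subset
    (isClosed_iUnion_of_finite fun j => isClosed_Icc.isClosed_le (hcc j) (hxc j))
    (iUnion_subset fun j _ hs => hs.1)
  obtain ⟨T, hTS, hTmin⟩ := hS.exists_isLeast ⟨t, mem_iUnion.2 ⟨i, ht, hti.le⟩⟩
  obtain ⟨k, hT, hkT⟩ := mem_iUnion.1 hTS
  have hbefore : ∀ s ∈ Ico α T, ∀ j, x s j < c j s := fun s hs j => by
    by_contra! hsj
    exact (hTmin (mem_iUnion.2 ⟨j, ⟨hs.1, hs.2.le.trans hT.2⟩, hsj⟩)).not_gt hs.2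
  have hαT : α < T := hT.1.lt_of_ne (by rintro rfl; linarith [hinit k])
  set R := {s | s ∈ Icc α T ∧ x s k ≤ c k s - ε}
  have hR : IsCompact R := isCompact_Icc.of_isClosed_subset
    (isClosed_Icc.isClosed_le ((hxc k).mono (Icc_subset_Icc le_rfl hT.2))
      (((hcc k).mono (Icc_subset_Icc le_rfl hT.2)).sub continuousOn_const))
    fun _ hs => hs.1
  obtain ⟨t₁, ⟨ht₁, hkt₁⟩, ht₁max⟩ := hR.exists_isGreatest ⟨α, ⟨le_rfl, hαT.le⟩, hinit k⟩
  have ht₁T : t₁ ≤ T := ht₁.2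
  have hsub : Icc t₁ T ⊆ Icc α β := Icc_subset_Icc ht₁.1 hT.2
  have hint : ∀ {f : ℝ → ℝ} {u v : ℝ}, α ≤ u → u ≤ v → v ≤ β → IntegrableOn f (Icc α β) →
      IntervalIntegrable f volume u v := fun hu huv hv hf =>
    (intervalIntegrable_iff_integrableOn_Icc_of_le huv).2 (hf.mono_set (Icc_subset_Icc hu hv))
  have hrise : ∫ s in t₁..T, D s k ≤ c k T - c k t₁ := by
    refine integral_le_sub_of_ae_le_deriv ht₁T (hint ht₁.1 ht₁T hT.2 (hD k))
      (fun s hs => hc k s (hsub hs)) (hint ht₁.1 ht₁T hT.2 (hc' k)) ?_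
    filter_upwards [hslope] with s hslope_s hs
    refine hslope_s ⟨ht₁.1.trans_lt hs.1, hs.2.trans_le hT.2⟩ k
      (fun u hu j => (hbefore u ⟨hu.1, hu.2.trans_lt hs.2⟩ j).le) ?_
    by_contra! hks
    exact (ht₁max ⟨⟨ht₁.1.trans hs.1.le, hs.2.le⟩, hks.le⟩).not_gt hs.1
  have hsplit := intervalIntegral.integral_interval_sub_left (hint le_rfl hT.1 hT.2 (hD k))
    (hint le_rfl ht₁.1 (ht₁T.trans hT.2) (hD k))
  linarith [hx k T hT, hx k t₁ (hsub ⟨le_rfl, ht₁T⟩)]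

theorem integral_rep_of_le {x D : ℝ → ℝ} {t₀ ξ t : ℝ} (hD : ∀ T, IntegrableOn D (Icc t₀ T))
    (hx : ∀ t, t₀ ≤ t → x t = x t₀ + ∫ s in t₀..t, D s) (hξ : t₀ ≤ ξ) (ht : ξ ≤ t) :
    x t = x ξ + ∫ s in ξ..t, D s := by
  have hint : ∀ T, t₀ ≤ T → IntervalIntegrable D volume t₀ T := fun T hT =>
    (intervalIntegrable_iff_integrableOn_Icc_of_le hT).2 (hD T)
  rw [← intervalIntegral.integral_interval_sub_left (hint t (hξ.trans ht)) (hint ξ hξ),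
    hx t (hξ.trans ht), hx ξ hξ]
  ring

theorem sum_mul_le_card_sub_one_mul {ι : Type*} [Fintype ι] {w v : ι → ℝ} {i : ι} {abar B : ℝ}
    (hw : ∀ j, 0 ≤ w j ∧ w j ≤ abar) (hwi : w i = 0) (hv : ∀ j ≠ i, v j ≤ B) (hB : 0 ≤ B) :
    ∑ j, w j * v j ≤ ((Fintype.card ι : ℝ) - 1) * abar * B := by
  classical
  rw [← Finset.sum_erase (a := i) _ (by simp [hwi])]
  calc ∑ j ∈ Finset.univ.erase i, w j * v j ≤ ∑ j ∈ Finset.univ.erase i, abar * B :=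
        Finset.sum_le_sum fun j hj =>
          (mul_le_mul_of_nonneg_left (hv j (Finset.ne_of_mem_erase hj)) (hw j).1).trans
            (mul_le_mul_of_nonneg_right (hw j).2 hB)
    _ = ((Fintype.card ι : ℝ) - 1) * abar * B := by
        rw [Finset.sum_const, Finset.card_erase_of_mem (Finset.mem_univ i), Finset.card_univ,
          nsmul_eq_mul, Nat.cast_sub (Fintype.card_pos_iff.2 ⟨i⟩)]
        push_cast
        ring

theorem le_Lam {n : ℕ} {t₀ hbar ξ s : ℝ} {x : ℝ → Fin n → ℝ} (hx : LocBounded n t₀ hbar x)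
    (hξ : t₀ ≤ ξ) (j : Fin n) (hs : s ∈ Icc (ξ - hbar) ξ) : x s j ≤ Lam n hbar x ξ := by
  obtain ⟨C, hC⟩ := hx ξ
  have hbdd : BddAbove ((fun s => x s j) '' Icc (ξ - hbar) ξ) := ⟨C, by
    rintro _ ⟨u, hu, rfl⟩
    exact (abs_le.1 (hC j u (Icc_subset_Icc (by linarith) le_rfl hu))).2⟩
  exact (le_csSup hbdd ⟨s, hs, rfl⟩).trans
    (le_ciSup (f := fun i => sSup ((fun s => x s i) '' Icc (ξ - hbar) ξ))
      (finite_range _).bddAbove j)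

noncomputable def consensusBarrier (K L ξ ε y t : ℝ) : ℝ :=
  L - (L - y) * exp (-(K * (t - ξ))) + ε * exp (K * (t - ξ))

theorem hasDerivAt_consensusBarrier (K L ξ ε y t : ℝ) :
    HasDerivAt (consensusBarrier K L ξ ε y)
      (K * ((L - y) * exp (-(K * (t - ξ)))) + K * (ε * exp (K * (t - ξ)))) t := by
  have hlin : HasDerivAt (fun t => K * (t - ξ)) K t := by
    simpa using ((hasDerivAt_id t).sub_const ξ).const_mul K
  exact (((hlin.neg.exp.const_mul (L - y)).const_sub L).add (hlin.exp.const_mul ε)).congr_deriv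
    (by simp only [Pi.neg_apply]; ring)

theorem consensusBarrier_le {K L ξ ε y u t : ℝ} (hK : 0 ≤ K) (hε : 0 ≤ ε) (hy : y ≤ L)
    (hut : u ≤ t) : consensusBarrier K L ξ ε y u ≤ L + ε * exp (K * (t - ξ)) := by
  have hexp : exp (K * (u - ξ)) ≤ exp (K * (t - ξ)) := exp_le_exp.2 (by gcongr)
  have : 0 ≤ (L - y) * exp (-(K * (u - ξ))) := mul_nonneg (by linarith) (exp_pos _).le
  unfold consensusBarrier
  nlinarith

theorem sum_mul_sub_le_deriv_consensusBarrier {n : ℕ} {x : ℝ → Fin n → ℝ} {w d : Fin n → ℝ}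
    {i : Fin n} {abar hbar L ξ ε s : ℝ} (habar : 0 ≤ abar) (hhbar : 0 ≤ hbar) (hε : 0 ≤ ε)
    (hw : ∀ j, 0 ≤ w j ∧ w j ≤ abar) (hwi : w i = 0) (hd : ∀ j, 0 ≤ d j ∧ d j ≤ hbar)
    (hpast : ∀ j, ∀ u ∈ Icc (ξ - hbar) ξ, x u j ≤ L)
    (hprev : ∀ u ∈ Icc ξ s, ∀ j, x u j ≤ consensusBarrier ((n - 1) * abar) L ξ ε (x ξ j) u)
    (hs : ξ ≤ s) (hnear : consensusBarrier ((n - 1) * abar) L ξ ε (x ξ i) s - ε ≤ x s i) :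
    ∑ j, w j * (x (s - d j) j - x s i) ≤
      (n - 1) * abar * ((L - x ξ i) * exp (-((n - 1) * abar * (s - ξ)))) +
        (n - 1) * abar * (ε * exp ((n - 1) * abar * (s - ξ))) := by
  set K : ℝ := (n - 1) * abar
  have hK : 0 ≤ K := mul_nonneg (by linarith [(Nat.one_le_cast (α := ℝ)).2 i.pos]) habar
  have hxξ : ∀ j, x ξ j ≤ L := fun j => hpast j ξ ⟨by linarith, le_rfl⟩
  have hdelayed : ∀ j, x (s - d j) j ≤ L + ε * exp (K * (s - ξ)) := fun j => by
    rcases le_or_gt (s - d j) ξ with hpre | hpost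
    · have := hpast j (s - d j) ⟨by linarith [(hd j).2], hpre⟩
      have : 0 ≤ ε * exp (K * (s - ξ)) := by positivity
      linarith
    · exact (hprev (s - d j) ⟨hpost.le, by linarith [(hd j).1]⟩ j).trans
        (consensusBarrier_le hK hε (hxξ j) (by linarith [(hd j).1]))
  have hxs := (hprev s ⟨hs, le_rfl⟩ i).trans (consensusBarrier_le hK hε (hxξ i) le_rfl)
  have hexp : 1 ≤ exp (K * (s - ξ)) := one_le_exp (mul_nonneg hK (by linarith))
  calc ∑ j, w j * (x (s - d j) j - x s i) ≤ K * (L + ε * exp (K * (s - ξ)) - x s i) := by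
        simpa [K] using sum_mul_le_card_sub_one_mul hw hwi
          (fun j _ => by linarith [hdelayed j]) (by linarith)
    _ ≤ K * ((L - x ξ i) * exp (-(K * (s - ξ))) + ε * exp (K * (s - ξ))) := by
        unfold consensusBarrier at hnear
        gcongr
        nlinarith
    _ = _ := by ring

theorem IsSolIneq.le_consensusBarrier {n : ℕ} {abar hbar t0 ξ ε : ℝ}
    {a h : Fin n → Fin n → ℝ → ℝ} {x D : ℝ → Fin n → ℝ} (habar : 0 ≤ abar) (hhbar : 0 ≤ hbar)
    (ha : GoodWeights n abar a) (hh : GoodDelays n hbar h) (ht0 : 0 ≤ t0)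
    (hx : IsSolIneq n a h hbar t0 x D) (hξ : t0 ≤ ξ) (hε : 0 < ε) :
    ∀ t ∈ Icc ξ (ξ + hbar), ∀ j,
      x t j ≤ consensusBarrier ((n - 1) * abar) (Lam n hbar x ξ) ξ ε (x ξ j) t := by
  obtain ⟨hbdd, hDint, hxrep, hDineq⟩ := hx
  obtain ⟨-, haBnd, haDiag⟩ := ha
  obtain ⟨-, hhBnd, -⟩ := hh
  refine le_barrier_of_ae_deriv_le hε
    (fun j => (hDint j _).mono_set (Icc_subset_Icc hξ le_rfl))
    (fun j t ht => integral_rep_of_le (hDint j) (hxrep j) hξ ht.1)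
    (fun j s _ => hasDerivAt_consensusBarrier _ _ ξ ε (x ξ j) s)
    (fun j => Continuous.integrableOn_Icc (by fun_prop))
    (fun j => by simp [consensusBarrier]) ?_
  filter_upwards [hDineq] with s hDs hs j hprev hnear
  have hs0 : 0 ≤ s := by linarith [hs.1]
  exact (hDs (by linarith [hs.1]) j).trans (sum_mul_sub_le_deriv_consensusBarrier habar hhbar
    hε.le (fun k => haBnd j k s hs0) (haDiag j s hs0) (fun k => hhBnd j k s hs0)
    (fun k u hu => le_Lam hbdd hξ k hu) hprev hs.1.le hnear)

theorem stmt11 (n : ℕ) (hn : 1 ≤ n) (abar hbar : ℝ) (habar : 0 ≤ abar) (hhbar : 0 ≤ hbar)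
    (a h : Fin n → Fin n → ℝ → ℝ)
    (ha : GoodWeights n abar a) (hh : GoodDelays n hbar h)
    (t0 : ℝ) (ht0 : 0 ≤ t0) (x D : ℝ → Fin n → ℝ)
    (hx : IsSolIneq n a h hbar t0 x D)
    (ξ : ℝ) (hξ : t0 ≤ ξ) :
    ∀ i : Fin n, ∀ t ∈ Icc ξ (ξ + hbar),
      x t i ≤ Real.exp (-(((n : ℝ) - 1) * abar * hbar)) * x ξ i
        + (1 - Real.exp (-(((n : ℝ) - 1) * abar * hbar))) * Lam n hbar x ξ := by
  intro i t ht
  set K : ℝ := (n - 1) * abar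
  set L := Lam n hbar x ξ
  have hlim : x t i ≤ L - (L - x ξ i) * exp (-(K * (t - ξ))) := by
    refine le_of_forall_pos_le_add fun δ hδ => ?_
    have := hx.le_consensusBarrier habar hhbar ha hh ht0 hξ
      (ε := δ / exp (K * (t - ξ))) (by positivity) t ht i
    rwa [consensusBarrier, div_mul_cancel₀ _ (exp_pos _).ne'] at this
  have hK : 0 ≤ K := mul_nonneg (by linarith [(Nat.one_le_cast (α := ℝ)).2 hn]) habar
  have hθ : exp (-(K * hbar)) ≤ exp (-(K * (t - ξ))) :=
    exp_le_exp.2 (neg_le_neg (mul_le_mul_of_nonneg_left (by linarith [ht.2]) hK))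
  have hxξ : x ξ i ≤ L := le_Lam hx.1 hξ i ⟨by linarith, le_rfl⟩
  linarith [mul_le_mul_of_nonneg_left hθ (sub_nonneg.2 hxξ)]
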